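/- arXiv:math/0611555 — 6 statements merged into one kernel-verified Lean document; each statement's English description precedes it below -/
import Mathlib

section
/- Let K : ℝ → ℝ be continuous, periodic with period 1, and symmetric (K(−x)=K(x)), and let 𝐊 be the integral operator (𝐊g)(x) = ∫₀¹ K(x−y) g(y) dy on L²[0,1]. If 𝐊 is positive semidefinite, then for every g ∈ L²[0,1], ‖𝐊g‖_{L^∞}² ≤ ‖K‖_{L^∞} · ⟨g, 𝐊g⟩. -/
/-!
Fix `x`; by periodicity of `𝐊g` we may take `x = x₀ ∈ [0, 1)`. For `x₀ < u ≤ 1` let `φᵤ` be the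
normalized indicator of `(x₀, u]`. Since `‖φᵤ‖₁ = 1`, `⟨φᵤ, 𝐊φᵤ⟩ ≤ sup |K|`, so Cauchy–Schwarz for the
nonnegative symmetric form `⟨·, 𝐊·⟩` gives `⟨φᵤ, 𝐊g⟩² ≤ sup |K| · ⟨g, 𝐊g⟩`. But `⟨φᵤ, 𝐊g⟩` is the
mean of the continuous function `𝐊g` over `(x₀, u]`, which tends to `(𝐊g)(x₀)` as `u ↓ x₀`.
-/

open MeasureTheory Set Filter Topology Function

namespace MeasureTheory

section KernelOperator

variable {α β : Type*} [MeasurableSpace α] {μ : Measure α} {M : ℝ}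

/-- `kernelOp μ k g` is the integral operator `𝐊g`, and `kernelForm μ k f g` is `⟨f, 𝐊g⟩`. -/
noncomputable def kernelOp (μ : Measure α) (k : β → α → ℝ) (g : α → ℝ) (x : β) : ℝ :=
  ∫ y, k x y * g y ∂μ

noncomputable def kernelForm (μ : Measure α) (k : α → α → ℝ) (f g : α → ℝ) : ℝ :=
  ∫ x, f x * kernelOp μ k g x ∂μ

theorem integrable_kernel_mul {k : β → α → ℝ} (hk : ∀ x, AEStronglyMeasurable (k x) μ)
    (hM : ∀ x y, |k x y| ≤ M) {g : α → ℝ} (hg : Integrable g μ) (x : β) :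
    Integrable (fun y => k x y * g y) μ :=
  hg.bdd_mul (hk x) (ae_of_all _ fun y => hM x y)

theorem abs_kernelOp_le {k : β → α → ℝ} (hM : ∀ x y, |k x y| ≤ M) {g : α → ℝ}
    (hg : Integrable g μ) (x : β) : |kernelOp μ k g x| ≤ M * ∫ y, |g y| ∂μ := by
  rw [← Real.norm_eq_abs, kernelOp]
  refine (norm_integral_le_of_norm_le (hg.abs.const_mul M) (ae_of_all _ fun y => ?_)).trans_eq
    (integral_const_mul M _)
  rw [Real.norm_eq_abs, abs_mul]
  exact mul_le_mul_of_nonneg_right (hM x y) (abs_nonneg _)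

theorem continuous_kernelOp [TopologicalSpace β] [FirstCountableTopology β] {k : β → α → ℝ}
    (hk : ∀ x, AEStronglyMeasurable (k x) μ) (hk_cont : ∀ y, Continuous (k · y))
    (hM : ∀ x y, |k x y| ≤ M) {g : α → ℝ} (hg : Integrable g μ) :
    Continuous (kernelOp μ k g) := by
  refine continuous_of_dominated (bound := fun y => M * |g y|)
    (fun x => (integrable_kernel_mul hk hM hg x).1) (fun x => ae_of_all _ fun y => ?_)
    (hg.abs.const_mul M) (ae_of_all _ fun y => (hk_cont y).mul continuous_const)
  rw [Real.norm_eq_abs, abs_mul]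
  exact mul_le_mul_of_nonneg_right (hM x y) (abs_nonneg _)

theorem kernelOp_add {k : β → α → ℝ} (hk : ∀ x, AEStronglyMeasurable (k x) μ)
    (hM : ∀ x y, |k x y| ≤ M) {f g : α → ℝ} (hf : Integrable f μ) (hg : Integrable g μ) :
    kernelOp μ k (f + g) = kernelOp μ k f + kernelOp μ k g := by
  ext x
  simp only [kernelOp, Pi.add_apply, mul_add]
  exact integral_add (integrable_kernel_mul hk hM hf x) (integrable_kernel_mul hk hM hg x)

theorem kernelOp_smul (k : β → α → ℝ) (c : ℝ) (g : α → ℝ) :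
    kernelOp μ k (c • g) = c • kernelOp μ k g := by
  ext x
  simp only [kernelOp, Pi.smul_apply, smul_eq_mul, mul_left_comm _ c, integral_const_mul]

variable {k : α → α → ℝ}

theorem abs_kernelForm_le (hM : ∀ x y, |k x y| ≤ M) {f g : α → ℝ} (hf : Integrable f μ)
    (hg : Integrable g μ) :
    |kernelForm μ k f g| ≤ M * (∫ x, |f x| ∂μ) * ∫ y, |g y| ∂μ := by
  rw [← Real.norm_eq_abs, kernelForm, mul_comm M, mul_assoc]
  refine (norm_integral_le_of_norm_le (hf.abs.mul_const _) (ae_of_all _ fun x => ?_)).trans_eq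
    (integral_mul_const _ _)
  rw [Real.norm_eq_abs, abs_mul]
  exact mul_le_mul_of_nonneg_left (abs_kernelOp_le hM hg x) (abs_nonneg _)

theorem integrable_prod_kernel (hk : Measurable (uncurry k)) (hM : ∀ x y, |k x y| ≤ M)
    {f g : α → ℝ} (hf : Integrable f μ) (hg : Integrable g μ) :
    Integrable (fun p : α × α => f p.1 * (k p.1 p.2 * g p.2)) (μ.prod μ) := by
  refine ((hf.abs.const_mul M).mul_prod hg.abs).mono'
    (hf.1.comp_fst.mul (hk.aestronglyMeasurable.mul hg.1.comp_snd)) (ae_of_all _ fun p => ?_)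
  rw [Real.norm_eq_abs, abs_mul, abs_mul, mul_comm M, mul_assoc]
  exact mul_le_mul_of_nonneg_left
    (mul_le_mul_of_nonneg_right (hM _ _) (abs_nonneg _)) (abs_nonneg _)

variable [SFinite μ]

theorem integrable_mul_kernelOp (hk : Measurable (uncurry k)) (hM : ∀ x y, |k x y| ≤ M)
    {f g : α → ℝ} (hf : Integrable f μ) (hg : Integrable g μ) :
    Integrable (fun x => f x * kernelOp μ k g x) μ := by
  simpa only [kernelOp, integral_const_mul] using
    (integrable_prod_kernel hk hM hf hg).integral_prod_left

theorem kernelForm_comm (hk : Measurable (uncurry k)) (hM : ∀ x y, |k x y| ≤ M)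
    (hsymm : ∀ x y, k x y = k y x) {f g : α → ℝ} (hf : Integrable f μ) (hg : Integrable g μ) :
    kernelForm μ k f g = kernelForm μ k g f := by
  calc kernelForm μ k f g = ∫ x, ∫ y, f x * (k x y * g y) ∂μ ∂μ := by
        simp only [kernelForm, kernelOp, integral_const_mul]
    _ = ∫ y, ∫ x, f x * (k x y * g y) ∂μ ∂μ :=
        integral_integral_swap (integrable_prod_kernel hk hM hf hg)
    _ = kernelForm μ k g f := by
        simp only [kernelForm, kernelOp, ← integral_const_mul]
        refine integral_congr_ae (ae_of_all _ fun y => integral_congr_ae (ae_of_all _ fun x => ?_))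
        simp only [hsymm x y]
        ring

theorem kernelForm_add_left (hk : Measurable (uncurry k)) (hM : ∀ x y, |k x y| ≤ M)
    {f f' g : α → ℝ} (hf : Integrable f μ) (hf' : Integrable f' μ) (hg : Integrable g μ) :
    kernelForm μ k (f + f') g = kernelForm μ k f g + kernelForm μ k f' g := by
  simp only [kernelForm, Pi.add_apply, add_mul]
  exact integral_add (integrable_mul_kernelOp hk hM hf hg) (integrable_mul_kernelOp hk hM hf' hg)

theorem kernelForm_add_right (hk : Measurable (uncurry k)) (hM : ∀ x y, |k x y| ≤ M)
    {f g g' : α → ℝ} (hf : Integrable f μ) (hg : Integrable g μ) (hg' : Integrable g' μ) :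
    kernelForm μ k f (g + g') = kernelForm μ k f g + kernelForm μ k f g' := by
  simp only [kernelForm, kernelOp_add (fun _ => hk.of_uncurry_left.aestronglyMeasurable) hM hg hg',
    Pi.add_apply, mul_add]
  exact integral_add (integrable_mul_kernelOp hk hM hf hg) (integrable_mul_kernelOp hk hM hf hg')

omit [SFinite μ] in
theorem kernelForm_smul_left (c : ℝ) (f g : α → ℝ) :
    kernelForm μ k (c • f) g = c * kernelForm μ k f g := by
  simp only [kernelForm, Pi.smul_apply, smul_eq_mul, mul_assoc, integral_const_mul]

omit [SFinite μ] in
theorem kernelForm_smul_right (c : ℝ) (f g : α → ℝ) :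
    kernelForm μ k f (c • g) = c * kernelForm μ k f g := by
  simp only [kernelForm, kernelOp_smul, Pi.smul_apply, smul_eq_mul, mul_left_comm _ c,
    integral_const_mul]

theorem kernelForm_add_smul_self (hk : Measurable (uncurry k)) (hM : ∀ x y, |k x y| ≤ M)
    (hsymm : ∀ x y, k x y = k y x) {f g : α → ℝ} (hf : Integrable f μ) (hg : Integrable g μ)
    (t : ℝ) :
    kernelForm μ k (f + t • g) (f + t • g) =
      kernelForm μ k f f + 2 * t * kernelForm μ k f g + t ^ 2 * kernelForm μ k g g := by
  have htg : Integrable (t • g) μ := hg.smul t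
  rw [kernelForm_add_left hk hM hf htg (hf.add htg), kernelForm_add_right hk hM hf hf htg,
    kernelForm_add_right hk hM htg hf htg, kernelForm_smul_left, kernelForm_smul_left,
    kernelForm_smul_right, kernelForm_smul_right, kernelForm_comm hk hM hsymm hg hf]
  ring

theorem sq_kernelForm_le (hk : Measurable (uncurry k)) (hM : ∀ x y, |k x y| ≤ M)
    (hsymm : ∀ x y, k x y = k y x) {f g : α → ℝ} (hf : Integrable f μ) (hg : Integrable g μ)
    (hpos : ∀ t : ℝ, 0 ≤ kernelForm μ k (f + t • g) (f + t • g)) :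
    kernelForm μ k f g ^ 2 ≤ kernelForm μ k f f * kernelForm μ k g g := by
  have hdisc := discrim_le_zero (K := ℝ) (a := kernelForm μ k g g) (b := 2 * kernelForm μ k f g)
    (c := kernelForm μ k f f) fun t => by
      have := hpos t
      rw [kernelForm_add_smul_self hk hM hsymm hf hg] at this
      linarith
  rw [discrim] at hdisc
  linarith

end KernelOperator

end MeasureTheory

theorem abs_le_sSup_range_abs_of_periodic {K : ℝ → ℝ} (hK : Continuous K) {c : ℝ}
    (hper : Periodic K c) (hc : c ≠ 0) (t : ℝ) : |K t| ≤ sSup (range fun t => |K t|) :=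
  le_csSup ((hper.comp abs).isBounded_of_continuous hc hK.abs).bddAbove ⟨t, rfl⟩

theorem Function.Periodic.kernelOp_sub {K : ℝ → ℝ} {c : ℝ} (hper : Periodic K c)
    (μ : Measure ℝ) (g : ℝ → ℝ) : Periodic (kernelOp μ (fun x y => K (x - y)) g) c := fun x => by
  simp only [kernelOp, add_sub_right_comm, hper _]

theorem tendsto_inv_mul_intervalIntegral_nhdsGT {G : ℝ → ℝ} (hG : Continuous G) (a : ℝ) :
    Tendsto (fun u => (u - a)⁻¹ * ∫ t in a..u, G t) (𝓝[>] a) (𝓝 (G a)) := by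
  have := hasDerivAt_iff_tendsto_slope.1 (hG.integral_hasStrictDerivAt a a).hasDerivAt
  refine (this.mono_left (nhdsGT_le_nhdsNE a)).congr fun u => ?_
  simp [slope_def_module]

theorem setIntegral_indicator_Ioc_const_mul {s : Set ℝ} {a b : ℝ} (hab : a ≤ b)
    (h : Ioc a b ⊆ s) (c : ℝ) (G : ℝ → ℝ) :
    ∫ x in s, (Ioc a b).indicator (fun _ => c) x * G x = c * ∫ t in a..b, G t := by
  simp_rw [← indicator_mul_left]
  rw [integral_indicator measurableSet_Ioc, Measure.restrict_restrict measurableSet_Ioc,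
    inter_eq_self_of_subset_left h, integral_const_mul, intervalIntegral.integral_of_le hab]

theorem setIntegral_abs_indicator_Ioc_inv {s : Set ℝ} {a b : ℝ} (hab : a < b)
    (h : Ioc a b ⊆ s) : ∫ x in s, |(Ioc a b).indicator (fun _ => (b - a)⁻¹) x| = 1 := by
  have hc : 0 ≤ (b - a)⁻¹ := inv_nonneg.2 (sub_pos.2 hab).le
  have habs (x : ℝ) : |(Ioc a b).indicator (fun _ => (b - a)⁻¹) x|
      = (Ioc a b).indicator (fun _ => (b - a)⁻¹) x * 1 := by
    rw [mul_one, abs_of_nonneg (indicator_nonneg (fun _ _ => hc) x)]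
  simp_rw [habs, setIntegral_indicator_Ioc_const_mul hab.le h, intervalIntegral.integral_const,
    smul_eq_mul, mul_one, inv_mul_cancel₀ (sub_pos.2 hab).ne']

theorem sq_inv_mul_intervalIntegral_kernelOp_le {s : Set ℝ}
    [IsFiniteMeasure (volume.restrict s)] {k : ℝ → ℝ → ℝ} {M : ℝ} (hk : Measurable (uncurry k))
    (hM : ∀ x y, |k x y| ≤ M) (hsymm : ∀ x y, k x y = k y x)
    (hpos : ∀ f : ℝ → ℝ, Measurable f → MemLp f 2 (volume.restrict s) →
      0 ≤ kernelForm (volume.restrict s) k f f)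
    {g : ℝ → ℝ} (hg : Measurable g) (hg2 : MemLp g 2 (volume.restrict s)) {a b : ℝ} (hab : a < b)
    (h : Ioc a b ⊆ s) :
    ((b - a)⁻¹ * ∫ t in a..b, kernelOp (volume.restrict s) k g t) ^ 2 ≤
      M * kernelForm (volume.restrict s) k g g := by
  set φ := (Ioc a b).indicator fun _ => (b - a)⁻¹
  have hφ : Measurable φ := measurable_const.indicator measurableSet_Ioc
  have hφ2 : MemLp φ 2 (volume.restrict s) :=
    memLp_indicator_const 2 measurableSet_Ioc _ (Or.inr (measure_ne_top _ _))
  have hφφ : kernelForm (volume.restrict s) k φ φ ≤ M := by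
    have := abs_kernelForm_le hM (hφ2.integrable one_le_two) (hφ2.integrable one_le_two)
    rw [setIntegral_abs_indicator_Ioc_inv hab h, mul_one, mul_one] at this
    exact (le_abs_self _).trans this
  calc ((b - a)⁻¹ * ∫ t in a..b, kernelOp (volume.restrict s) k g t) ^ 2
      = kernelForm (volume.restrict s) k φ g ^ 2 := by
        rw [kernelForm, setIntegral_indicator_Ioc_const_mul hab.le h]
    _ ≤ kernelForm (volume.restrict s) k φ φ * kernelForm (volume.restrict s) k g g :=
        sq_kernelForm_le hk hM hsymm (hφ2.integrable one_le_two) (hg2.integrable one_le_two)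
          fun t => hpos _ (hφ.add (hg.const_smul t)) (hφ2.add (hg2.const_smul t))
    _ ≤ M * kernelForm (volume.restrict s) k g g :=
        mul_le_mul_of_nonneg_right hφφ (hpos g hg hg2)

theorem convolution_sup_bound (K : ℝ → ℝ) (hK : Continuous K)
    (hper : ∀ x, K (x + 1) = K x) (hsymm : ∀ x, K (-x) = K x)
    (hpsd : ∀ f : ℝ → ℝ, Measurable f →
      MemLp f 2 (volume.restrict (Set.Icc (0:ℝ) 1)) →
      0 ≤ ∫ x in (0:ℝ)..1, f x * ∫ y in (0:ℝ)..1, K (x - y) * f y)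
    (g : ℝ → ℝ) (hg : Measurable g)
    (hg2 : MemLp g 2 (volume.restrict (Set.Icc (0:ℝ) 1))) :
    ∀ x : ℝ, (∫ y in (0:ℝ)..1, K (x - y) * g y) ^ 2 ≤
      sSup (Set.range fun t => |K t|) *
        ∫ x in (0:ℝ)..1, g x * ∫ y in (0:ℝ)..1, K (x - y) * g y := by
  intro x
  set μ := volume.restrict (Ioc (0:ℝ) 1)
  set k : ℝ → ℝ → ℝ := fun x y => K (x - y)
  have hM (x y : ℝ) : |k x y| ≤ sSup (range fun t => |K t|) :=
    abs_le_sSup_range_abs_of_periodic hK hper one_ne_zero _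
  have hk : Measurable (uncurry k) := (hK.comp continuous_sub).measurable
  have hk_symm (x y : ℝ) : k x y = k y x := by simp only [k, ← neg_sub x y, hsymm]
  have hμ : volume.restrict (Icc (0:ℝ) 1) = μ := (Measure.restrict_congr_set Ioc_ae_eq_Icc).symm
  simp only [hμ, intervalIntegral.integral_of_le zero_le_one] at hpsd hg2 ⊢
  change kernelOp μ k g x ^ 2 ≤ _ * kernelForm μ k g g
  have hG : Continuous (kernelOp μ k g) :=
    continuous_kernelOp (fun _ => hk.of_uncurry_left.aestronglyMeasurable)
      (fun y => hK.comp (continuous_sub_right y)) hM (hg2.integrable one_le_two)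
  -- the averaging intervals `(x₀, u]` must lie in `(0, 1]`
  obtain ⟨x₀, ⟨hx₀, hx₀1⟩, hx⟩ := (Periodic.kernelOp_sub hper μ g).exists_mem_Ico₀ one_pos x
  rw [hx]
  refine le_of_tendsto ((tendsto_inv_mul_intervalIntegral_nhdsGT hG x₀).pow 2) ?_
  filter_upwards [Ioc_mem_nhdsGT hx₀1] with u ⟨hx₀u, hu⟩
  exact sq_inv_mul_intervalIntegral_kernelOp_le hk hM hk_symm hpsd hg hg2 hx₀u
    (Ioc_subset_Ioc hx₀ hu)
end

section
/- Fix λ ∈ ℝ. For i = 1, 2, let p_i : ℝ → ℝ be C¹ and 1-periodic with ∫₀¹ p_i = 0, and define q_i(x) = p_i'(x) + p_i(x)² − ∫₀¹ p_i². Then |∫₀¹ p₁² − ∫₀¹ p₂²| ≤ ‖q₁ − q₂‖_{L^∞[0,1]}. -/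
/-!
Write `u = p₁ - p₂` and `s = p₁ + p₂`. Then `u' + s u = (q₁ - q₂) + c` with
`c = ∫₀¹ p₁² - ∫₀¹ p₂²`, a linear first-order equation for `u`. Multiplying by the integrating
factor `w = exp (∫₀ˣ s)` turns the left side into `(w u)'`, whose integral over `[0, 1]` vanishes
because `u` is periodic and `∫₀¹ s = 0`. Hence `c` is minus the `w`-weighted average of
`q₁ - q₂`, and a weighted average of a function is bounded by its sup norm.
-/

open MeasureTheory intervalIntegral

noncomputable def integratingFactor (s : ℝ → ℝ) (x : ℝ) : ℝ :=
  Real.exp (∫ t in (0 : ℝ)..x, s t)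

section

variable {s : ℝ → ℝ}

lemma integratingFactor_pos (x : ℝ) : 0 < integratingFactor s x :=
  Real.exp_pos _

lemma hasDerivAt_integratingFactor (hs : Continuous s) (x : ℝ) :
    HasDerivAt (integratingFactor s) (integratingFactor s x * s x) x :=
  (integral_hasDerivAt_right (hs.intervalIntegrable _ _)
    (hs.stronglyMeasurableAtFilter _ _) hs.continuousAt).exp

lemma continuous_integratingFactor (hs : Continuous s) : Continuous (integratingFactor s) :=
  continuous_iff_continuousAt.2 fun x => (hasDerivAt_integratingFactor hs x).continuousAt

lemma integral_integratingFactor_mul_eq_zero (hs : Continuous s)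
    (hs_mean : ∫ x in (0 : ℝ)..1, s x = 0) {u u' : ℝ → ℝ}
    (hu : ∀ x, HasDerivAt u (u' x) x) (hu' : Continuous u') (hu_per : u 1 = u 0) :
    ∫ x in (0 : ℝ)..1, integratingFactor s x * (u' x + s x * u x) = 0 := by
  have hw := continuous_integratingFactor hs
  have hu_cont : Continuous u := continuous_iff_continuousAt.2 fun x => (hu x).continuousAt
  have hderiv : ∀ x, HasDerivAt (fun y => integratingFactor s y * u y)
      (integratingFactor s x * (u' x + s x * u x)) x := fun x =>
    ((hasDerivAt_integratingFactor hs x).mul (hu x)).congr_deriv (by ring)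
  have hw_one : integratingFactor s 1 = integratingFactor s 0 := by
    simp only [integratingFactor, hs_mean, integral_same]
  rw [integral_eq_sub_of_hasDerivAt (fun x _ => hderiv x)
    ((hw.mul (hu'.add (hs.mul hu_cont))).intervalIntegrable _ _), hw_one, hu_per, sub_self]

variable {a b : ℝ} {w f : ℝ → ℝ}

lemma abs_integral_mul_le_sSup_mul_integral (hab : a ≤ b) (hw : Continuous w)
    (hw_nonneg : ∀ x, 0 ≤ w x) (hf : Continuous f) :
    |∫ x in a..b, w x * f x| ≤ sSup ((fun x => |f x|) '' Set.Icc a b) * ∫ x in a..b, w x := by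
  have hbdd : BddAbove ((fun x => |f x|) '' Set.Icc a b) :=
    (isCompact_Icc.image hf.abs).bddAbove
  calc |∫ x in a..b, w x * f x|
      ≤ ∫ x in a..b, |w x * f x| := abs_integral_le_integral_abs hab
    _ ≤ ∫ x in a..b, w x * sSup ((fun x => |f x|) '' Set.Icc a b) := by
        refine integral_mono_on hab ((hw.mul hf).abs.intervalIntegrable _ _)
          ((hw.mul continuous_const).intervalIntegrable _ _) fun x hx => ?_
        rw [abs_mul, abs_of_nonneg (hw_nonneg x)]
        exact mul_le_mul_of_nonneg_left (le_csSup hbdd ⟨x, hx, rfl⟩) (hw_nonneg x)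
    _ = sSup ((fun x => |f x|) '' Set.Icc a b) * ∫ x in a..b, w x := by
        rw [intervalIntegral.integral_mul_const, mul_comm]

lemma abs_le_sSup_of_integral_mul_add_eq_zero (hab : a < b) (hw : Continuous w)
    (hw_pos : ∀ x, 0 < w x) (hf : Continuous f) {c : ℝ}
    (h : ∫ x in a..b, w x * (f x + c) = 0) :
    |c| ≤ sSup ((fun x => |f x|) '' Set.Icc a b) := by
  have hW : 0 < ∫ x in a..b, w x :=
    intervalIntegral_pos_of_pos_on (hw.intervalIntegrable _ _) (fun x _ => hw_pos x) hab
  have hsplit : ∫ x in a..b, w x * (f x + c) =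
      (∫ x in a..b, w x * f x) + c * ∫ x in a..b, w x := by
    have hwf : IntervalIntegrable (fun x => w x * f x) volume a b :=
      (hw.mul hf).intervalIntegrable _ _
    have hwc : IntervalIntegrable (fun x => w x * c) volume a b :=
      (hw.mul continuous_const).intervalIntegrable _ _
    rw [mul_comm c, ← intervalIntegral.integral_mul_const, ← integral_add hwf hwc]
    simp only [mul_add]
  have hcW : c * ∫ x in a..b, w x = -∫ x in a..b, w x * f x := by
    rw [hsplit] at h
    linarith
  refine le_of_mul_le_mul_right ?_ hW
  calc |c| * ∫ x in a..b, w x = |c * ∫ x in a..b, w x| := by rw [abs_mul, abs_of_pos hW]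
    _ = |∫ x in a..b, w x * f x| := by rw [hcW, abs_neg]
    _ ≤ _ := abs_integral_mul_le_sSup_mul_integral hab.le hw (fun x => (hw_pos x).le) hf

end

theorem riccati_functional_lipschitz_general (p₁ p₂ : ℝ → ℝ)
    (hp₁ : ContDiff ℝ 1 p₁) (hp₂ : ContDiff ℝ 1 p₂)
    (hper₁ : ∀ x, p₁ (x + 1) = p₁ x) (hper₂ : ∀ x, p₂ (x + 1) = p₂ x)
    (hmean₁ : ∫ x in (0:ℝ)..1, p₁ x = 0) (hmean₂ : ∫ x in (0:ℝ)..1, p₂ x = 0)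
    (q₁ q₂ : ℝ → ℝ)
    (hq₁ : ∀ x, q₁ x = deriv p₁ x + (p₁ x) ^ 2 - ∫ t in (0:ℝ)..1, (p₁ t) ^ 2)
    (hq₂ : ∀ x, q₂ x = deriv p₂ x + (p₂ x) ^ 2 - ∫ t in (0:ℝ)..1, (p₂ t) ^ 2) :
    |(∫ x in (0:ℝ)..1, (p₁ x) ^ 2) - ∫ x in (0:ℝ)..1, (p₂ x) ^ 2| ≤
      sSup ((fun x => |q₁ x - q₂ x|) '' Set.Icc (0:ℝ) 1) := by
  have hdp₁ := hp₁.continuous_deriv le_rfl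
  have hdp₂ := hp₂.continuous_deriv le_rfl
  have hs : Continuous fun x => p₁ x + p₂ x := hp₁.continuous.add hp₂.continuous
  have hs_mean : ∫ x in (0:ℝ)..1, (p₁ x + p₂ x) = 0 := by
    rw [integral_add (hp₁.continuous.intervalIntegrable _ _)
      (hp₂.continuous.intervalIntegrable _ _), hmean₁, hmean₂, add_zero]
  have hu : ∀ x, HasDerivAt (fun y => p₁ y - p₂ y) (deriv p₁ x - deriv p₂ x) x := fun x =>
    ((hp₁.differentiable one_ne_zero x).hasDerivAt).sub
      ((hp₂.differentiable one_ne_zero x).hasDerivAt)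
  have hu_per : p₁ 1 - p₂ 1 = p₁ 0 - p₂ 0 := by
    simpa only [zero_add] using congrArg₂ (· - ·) (hper₁ 0) (hper₂ 0)
  have hq : Continuous fun x => q₁ x - q₂ x := by
    simp only [hq₁, hq₂]
    fun_prop
  refine abs_le_sSup_of_integral_mul_add_eq_zero one_pos
    (continuous_integratingFactor hs) integratingFactor_pos hq ?_
  refine Eq.trans ?_ (integral_integratingFactor_mul_eq_zero hs hs_mean hu (hdp₁.sub hdp₂) hu_per)
  congr 1 with x
  simp only [hq₁, hq₂]
  ring

theorem riccati_functional_lipschitz (lam : ℝ) (p₁ p₂ : ℝ → ℝ)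
    (hp₁ : ContDiff ℝ 1 p₁) (hp₂ : ContDiff ℝ 1 p₂)
    (hper₁ : ∀ x, p₁ (x + 1) = p₁ x) (hper₂ : ∀ x, p₂ (x + 1) = p₂ x)
    (hmean₁ : ∫ x in (0:ℝ)..1, p₁ x = 0) (hmean₂ : ∫ x in (0:ℝ)..1, p₂ x = 0)
    (q₁ q₂ : ℝ → ℝ)
    (hq₁ : ∀ x, q₁ x = deriv p₁ x + (p₁ x) ^ 2 - ∫ t in (0:ℝ)..1, (p₁ t) ^ 2)
    (hq₂ : ∀ x, q₂ x = deriv p₂ x + (p₂ x) ^ 2 - ∫ t in (0:ℝ)..1, (p₂ t) ^ 2) :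
    |(∫ x in (0:ℝ)..1, (p₁ x) ^ 2) - ∫ x in (0:ℝ)..1, (p₂ x) ^ 2| ≤
      sSup ((fun x => |q₁ x - q₂ x|) '' Set.Icc (0:ℝ) 1) :=
  riccati_functional_lipschitz_general p₁ p₂ hp₁ hp₂ hper₁ hper₂ hmean₁ hmean₂ q₁ q₂ hq₁ hq₂
end

section
/- Let p : ℝ → ℝ be C¹ and 1-periodic with ∫₀¹ p = 0, and define q̃(x) = p'(x) + p(x)² − ∫₀¹ p². Then ∫₀¹ p² ≤ ‖q̃‖_{L^∞[0,1]}. -/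
/-!
With `F x = ∫₀ˣ p`, the integrating factor `e^F` turns the Riccati expression into a derivative:
`(p e^F)' = (p' + p²) e^F`. Since `F 0 = F 1 = 0` (mean zero) and `p 0 = p 1` (periodicity), this
derivative integrates to zero over `[0, 1]`, so `p' + p² ≤ 0` somewhere. There
`q ≤ -∫₀¹ p² ≤ 0`, whence `∫₀¹ p² ≤ |q|`.
-/

open intervalIntegral Real Set

lemma exists_mem_Icc_nonpos_of_integral_eq_zero {g : ℝ → ℝ} {a b : ℝ} (hab : a < b)
    (hg : ContinuousOn g (Icc a b)) (h : ∫ x in a..b, g x = 0) : ∃ x ∈ Icc a b, g x ≤ 0 := by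
  by_contra! hpos
  have := intervalIntegral_pos_of_pos_on (hg.intervalIntegrable_of_Icc hab.le)
    (fun x hx => hpos x (Ioo_subset_Icc_self hx)) hab
  linarith

lemma continuous_deriv_add_sq {p : ℝ → ℝ} (hp : ContDiff ℝ 1 p) :
    Continuous fun x => deriv p x + p x ^ 2 :=
  (hp.continuous_deriv le_rfl).add (hp.continuous.pow 2)

lemma hasDerivAt_mul_exp_integral {p : ℝ → ℝ} (hp : ContDiff ℝ 1 p) (a x : ℝ) :
    HasDerivAt (fun y => p y * exp (∫ t in a..y, p t))
      ((deriv p x + p x ^ 2) * exp (∫ t in a..x, p t)) x := by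
  have hF := (hp.continuous.integral_hasStrictDerivAt a x).hasDerivAt
  exact ((hp.differentiable one_ne_zero x).hasDerivAt.fun_mul hF.exp).congr_deriv (by ring)

lemma exists_mem_Icc_deriv_add_sq_nonpos {p : ℝ → ℝ} (hp : ContDiff ℝ 1 p) {a b : ℝ} (hab : a < b)
    (hpab : p b = p a) (hmean : ∫ x in a..b, p x = 0) :
    ∃ x ∈ Icc a b, deriv p x + p x ^ 2 ≤ 0 := by
  set g := fun x => (deriv p x + p x ^ 2) * exp (∫ t in a..x, p t)
  have hg : Continuous g :=
    (continuous_deriv_add_sq hp).mul (continuous_primitive hp.continuous.intervalIntegrable a).rexp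
  have hint : ∫ x in a..b, g x = 0 := by
    rw [integral_eq_sub_of_hasDerivAt (fun x _ => hasDerivAt_mul_exp_integral hp a x)
      (hg.intervalIntegrable a b)]
    simp [hpab, hmean]
  obtain ⟨x, hx, hgx⟩ := exists_mem_Icc_nonpos_of_integral_eq_zero hab hg.continuousOn hint
  exact ⟨x, hx, nonpos_of_mul_nonpos_left hgx (exp_pos _)⟩

theorem riccati_functional_bounded (p : ℝ → ℝ) (hp : ContDiff ℝ 1 p)
    (hper : ∀ x, p (x + 1) = p x) (hmean : ∫ x in (0:ℝ)..1, p x = 0)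
    (q : ℝ → ℝ)
    (hq : ∀ x, q x = deriv p x + (p x) ^ 2 - ∫ t in (0:ℝ)..1, (p t) ^ 2) :
    (∫ x in (0:ℝ)..1, (p x) ^ 2) ≤ sSup ((fun x => |q x|) '' Set.Icc (0:ℝ) 1) := by
  obtain ⟨x, hx, hx_nonpos⟩ :=
    exists_mem_Icc_deriv_add_sq_nonpos hp one_pos (by simpa using hper 0) hmean
  have hC : 0 ≤ ∫ t in (0:ℝ)..1, (p t) ^ 2 :=
    integral_nonneg zero_le_one fun t _ => sq_nonneg (p t)
  have hq_cont : Continuous q := by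
    rw [funext hq]
    exact (continuous_deriv_add_sq hp).sub continuous_const
  calc (∫ t in (0:ℝ)..1, (p t) ^ 2) ≤ |q x| := by
        rw [hq x, abs_of_nonpos (by linarith)]
        linarith
    _ ≤ _ := le_csSup (isCompact_Icc.image hq_cont.abs).bddAbove ⟨x, hx, rfl⟩
end

section
/- Let p : ℝ → ℝ be continuous and 1-periodic, and let u : ℝ → ℝ be a C¹ 1-periodic solution of u'(x) = 2 p(x) u(x) + c with associated constant c ∈ ℝ and ∫₀¹ u = ∫₀¹ q for some continuous q with q negative somewhere. If u is somewhere negative then u(x) < 0 for all x; in particular if c ≠ 0 then u has no zero, and moreover if u is 1-periodic and never zero then necessarily c = 0. -/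
/-!
Multiplying by the integrating factor `exp (-∫ 2p)` turns `u' = 2pu + c` into
`(u e^{-2P})' = c e^{-2P}`. Since `∫₀¹ p = 0` the factor agrees at 0 and 1, so integrating over a
period gives `c ∫₀¹ e^{-2P} = 0`, i.e. `c = 0`. Then `u = u(x₀) e^{2(P - P(x₀))}` has the sign
of `u(x₀)` everywhere.
-/

open Real

section LinearODE

variable {a u : ℝ → ℝ} {c : ℝ}

theorem hasDerivAt_mul_exp_neg_of_linear {A : ℝ → ℝ} {x : ℝ}
    (hu : HasDerivAt u (a x * u x + c) x) (hA : HasDerivAt A (a x) x) :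
    HasDerivAt (fun y => u y * exp (-A y)) (c * exp (-A x)) x :=
  (hu.mul hA.neg.exp).congr_deriv (by simp only [Pi.neg_apply]; ring)

theorem forcing_eq_zero_of_linear_of_periodic {s t : ℝ} (hst : s < t) (ha : Continuous a)
    (hmean : ∫ x in s..t, a x = 0) (hode : ∀ x, HasDerivAt u (a x * u x + c) x)
    (hper : u t = u s) : c = 0 := by
  set A : ℝ → ℝ := fun x => ∫ y in s..x, a y
  have hA : ∀ x, HasDerivAt A (a x) x := fun x => (ha.integral_hasStrictDerivAt s x).hasDerivAt
  have hExp : Continuous fun x => exp (-A x) :=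
    (continuous_iff_continuousAt.2 fun x => (hA x).continuousAt).neg.rexp
  have hFTC : c * ∫ x in s..t, exp (-A x) = 0 := by
    rw [← intervalIntegral.integral_const_mul,
      intervalIntegral.integral_eq_sub_of_hasDerivAt
        (fun x _ => hasDerivAt_mul_exp_neg_of_linear (hode x) (hA x))
        ((continuous_const.mul hExp).intervalIntegrable s t)]
    simp [A, hmean, hper]
  have hpos : 0 < ∫ x in s..t, exp (-A x) :=
    intervalIntegral.intervalIntegral_pos_of_pos (hExp.intervalIntegrable s t)
      (fun x => exp_pos _) hst
  exact (mul_eq_zero.1 hFTC).resolve_right hpos.ne'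

theorem eq_mul_exp_integral_of_linear (ha : Continuous a)
    (hode : ∀ x, HasDerivAt u (a x * u x) x) (x y : ℝ) :
    u x = u y * exp (∫ t in y..x, a t) := by
  set A : ℝ → ℝ := fun z => ∫ t in y..z, a t
  have hA : ∀ z, HasDerivAt A (a z) z := fun z => (ha.integral_hasStrictDerivAt y z).hasDerivAt
  have hderiv : ∀ z, HasDerivAt (fun w => u w * exp (-A w)) 0 z := fun z => by
    simpa using hasDerivAt_mul_exp_neg_of_linear (c := 0) (by simpa using hode z) (hA z)
  have hconst : u x * exp (-A x) = u y := by
    simpa [A] using is_const_of_deriv_eq_zero (fun z => (hderiv z).differentiableAt)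
      (fun z => (hderiv z).deriv) x y
  change u x = u y * exp (A x)
  rw [← hconst, mul_assoc, ← exp_add, neg_add_cancel, exp_zero, mul_one]

end LinearODE

theorem lagrange_multiplier_sign_general (p u : ℝ → ℝ) (c : ℝ)
    (hp : Continuous p)
    (hpmean : ∫ x in (0:ℝ)..1, p x = 0)
    (hu : ContDiff ℝ 1 u) (huper : ∀ x, u (x + 1) = u x)
    (hode : ∀ x, deriv u x = 2 * p x * u x + c) :
    ((∃ x, u x < 0) → ∀ x, u x < 0) ∧
    (c ≠ 0 → ∀ x, u x ≠ 0) ∧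
    ((∀ x, u x ≠ 0) → c = 0) := by
  have hlin : ∀ x, HasDerivAt u (2 * p x * u x + c) x := fun x =>
    hode x ▸ (hu.differentiable one_ne_zero x).hasDerivAt
  have h2p : Continuous fun x => 2 * p x := continuous_const.mul hp
  have hc : c = 0 :=
    forcing_eq_zero_of_linear_of_periodic one_pos h2p (by simp [hpmean]) hlin
      (by simpa using huper 0)
  subst hc
  have hsol := eq_mul_exp_integral_of_linear h2p (by simpa using hlin)
  refine ⟨fun ⟨x₀, hx₀⟩ x => ?_, fun h => absurd rfl h, fun _ => rfl⟩
  rw [hsol x x₀]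
  exact mul_neg_of_neg_of_pos hx₀ (exp_pos _)

theorem lagrange_multiplier_sign (p u q : ℝ → ℝ) (c : ℝ)
    (hp : Continuous p) (hpper : ∀ x, p (x + 1) = p x)
    (hpmean : ∫ x in (0:ℝ)..1, p x = 0)
    (hu : ContDiff ℝ 1 u) (huper : ∀ x, u (x + 1) = u x)
    (hode : ∀ x, deriv u x = 2 * p x * u x + c)
    (hq : Continuous q) (hqneg : ∃ x, q x < 0)
    (hint : ∫ x in (0:ℝ)..1, u x = ∫ x in (0:ℝ)..1, q x) :
    ((∃ x, u x < 0) → ∀ x, u x < 0) ∧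
    (c ≠ 0 → ∀ x, u x ≠ 0) ∧
    ((∀ x, u x ≠ 0) → c = 0) :=
  lagrange_multiplier_sign_general p u c hp hpmean hu huper hode
end

section
/- Let K : ℝ → ℝ be continuous and 1-periodic with K(0) > 0, and let λ < 0. Let Λ₀(λ) denote the smallest eigenvalue of the periodic Schrödinger operator −d²/dx² + λK(x)/K(0) on [0,1) (equivalently, the infimum over C¹ 1-periodic ψ with ∫₀¹ ψ² = 1 of ∫₀¹ (ψ')² + λ∫₀¹ (K(x)/K(0)) ψ(x)² dx, assuming K ≤ K(0) pointwise so that Λ₀(λ) ≥ λ). Then |λ − Λ₀(λ)| = o(|λ|) as λ → −∞; that is, Λ₀(λ)/λ → 1. -/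
noncomputable def groundStateEnergy (K : ℝ → ℝ) (lam : ℝ) : ℝ :=
  sInf {E : ℝ | ∃ ψ : ℝ → ℝ, ContDiff ℝ 1 ψ ∧ (∀ x, ψ (x + 1) = ψ x) ∧
    (∫ x in (0:ℝ)..1, (ψ x) ^ 2) = 1 ∧
    E = (∫ x in (0:ℝ)..1, (deriv ψ x) ^ 2) +
      lam * ∫ x in (0:ℝ)..1, (K x / K 0) * (ψ x) ^ 2}

/-!
Since `K ≤ K 0`, every Rayleigh quotient is at least `λ`, hence `Λ₀(λ)/λ ≤ 1` for `λ < 0`.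
Conversely, a fixed normalised test function `ψ` gives `Λ₀(λ)/λ ≥ ∫ ψ'²/λ + ∫ (K/K 0) ψ²`, whose
limit as `λ → -∞` is `∫ (K/K 0) ψ²`, and this is close to `1` once `ψ²` concentrates at `0`.
We take `ψ² ∝ (1 + cos 2πx)ⁿ`: integration by parts gives
`n ∫ (1 - cos 2πx)(1 + cos 2πx)ⁿ ≤ ∫ (1 + cos 2πx)ⁿ`, while a continuous 1-periodic `w` satisfies
`w x ≥ w 0 - ε - M (1 - cos 2πx)` for some `M`, so the `ψ²`-average of `w` is at least `w 0 - 2ε`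
as soon as `n ≥ M/ε`.
-/

open Real Filter Topology Function

noncomputable def cosBump (n : ℕ) (x : ℝ) : ℝ := (1 + cos (2 * π * x)) ^ n

lemma cosBump_nonneg (n : ℕ) (x : ℝ) : 0 ≤ cosBump n x :=
  pow_nonneg (by linarith [neg_one_le_cos (2 * π * x)]) n

lemma contDiff_cosBump {k : WithTop ℕ∞} (n : ℕ) : ContDiff ℝ k (cosBump n) := by
  unfold cosBump; fun_prop

@[fun_prop]
lemma continuous_cosBump (n : ℕ) : Continuous (cosBump n) :=
  (contDiff_cosBump (k := 0) n).continuous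

lemma cosBump_periodic (n : ℕ) : Periodic (cosBump n) 1 := fun x => by
  simp only [cosBump, mul_add, mul_one, cos_add_two_pi]

lemma cosBump_sq (n : ℕ) (x : ℝ) : cosBump n x ^ 2 = cosBump (2 * n) x := by
  rw [cosBump, cosBump, ← pow_mul, mul_comm n]

lemma integral_cosBump_pos (n : ℕ) : 0 < ∫ x in (0 : ℝ)..1, cosBump n x := by
  have h := intervalIntegral.integral_lt_integral_of_continuousOn_of_le_of_exists_lt zero_lt_one
    continuousOn_const (continuous_cosBump n).continuousOn (fun x _ => cosBump_nonneg n x)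
    ⟨0, by norm_num, by simp [cosBump]⟩
  simpa using h

-- Integration by parts against `sin (2πx)`, using `(1 - cos)(1 + cos) = sin²`.
lemma mul_integral_one_sub_cos_mul_cosBump (n : ℕ) :
    (n + 1 : ℝ) * ∫ x in (0 : ℝ)..1, (1 - cos (2 * π * x)) * cosBump (n + 1) x =
      ∫ x in (0 : ℝ)..1, cos (2 * π * x) * cosBump (n + 1) x := by
  have hu : ∀ x, HasDerivAt (fun x => sin (2 * π * x)) (cos (2 * π * x) * (2 * π)) x :=
    fun x => by simpa using ((hasDerivAt_id x).const_mul (2 * π)).sin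
  have hv : ∀ x, HasDerivAt (cosBump (n + 1))
      (-((n + 1) * cosBump n x * (sin (2 * π * x) * (2 * π)))) x := fun x => by
    have h := (((hasDerivAt_id x).const_mul (2 * π)).cos.const_add 1).pow (n + 1)
    have hf : (fun x => 1 + cos (2 * π * id x)) ^ (n + 1) = cosBump (n + 1) := by
      funext; simp [cosBump]
    rw [hf] at h
    exact h.congr_deriv (by simp [cosBump])
  have hibp := intervalIntegral.integral_mul_deriv_eq_deriv_mul (a := 0) (b := 1)
    (fun x _ => hu x) (fun x _ => hv x)
    ((by fun_prop : Continuous fun x => cos (2 * π * x) * (2 * π)).intervalIntegrable _ _)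
    ((by fun_prop : Continuous fun x =>
      -((n + 1) * cosBump n x * (sin (2 * π * x) * (2 * π)))).intervalIntegrable _ _)
  have hl : ∀ x, sin (2 * π * x) * -((n + 1) * cosBump n x * (sin (2 * π * x) * (2 * π))) =
      -(2 * π * (n + 1)) * ((1 - cos (2 * π * x)) * cosBump (n + 1) x) := fun x => by
    rw [cosBump, cosBump, pow_succ]
    linear_combination (-(2 * π * (n + 1)) * (1 + cos (2 * π * x)) ^ n) *
      sin_sq_add_cos_sq (2 * π * x)
  have hr : ∀ x, cos (2 * π * x) * (2 * π) * cosBump (n + 1) x =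
      2 * π * (cos (2 * π * x) * cosBump (n + 1) x) := fun x => by ring
  simp only [hl, hr, intervalIntegral.integral_const_mul, mul_one, mul_zero, sin_zero, sin_two_pi,
    zero_mul, sub_zero, zero_sub] at hibp
  apply mul_left_cancel₀ (by positivity : 2 * π ≠ 0)
  linear_combination -hibp

lemma nat_mul_integral_one_sub_cos_mul_cosBump_le (n : ℕ) :
    n * ∫ x in (0 : ℝ)..1, (1 - cos (2 * π * x)) * cosBump n x ≤
      ∫ x in (0 : ℝ)..1, cosBump n x := by
  cases n with
  | zero => simpa using (integral_cosBump_pos 0).le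
  | succ n =>
    push_cast
    rw [mul_integral_one_sub_cos_mul_cosBump]
    refine intervalIntegral.integral_mono_on zero_le_one
      ((by fun_prop : Continuous fun x => cos (2 * π * x) * cosBump (n + 1) x).intervalIntegrable
        _ _)
      ((continuous_cosBump _).intervalIntegrable _ _) fun x _ => ?_
    exact mul_le_of_le_one_left (cosBump_nonneg _ x) (cos_le_one _)

lemma Function.Periodic.exists_sub_mul_one_sub_cos_le {w : ℝ → ℝ} (hper : Periodic w 1)
    (hw : Continuous w) {ε : ℝ} (hε : 0 < ε) :
    ∃ M, 0 ≤ M ∧ ∀ x, w 0 - ε - M * (1 - cos (2 * π * x)) ≤ w x := by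
  obtain ⟨δ, hδ, hnear⟩ := Metric.continuousAt_iff.1 hw.continuousAt ε hε
  obtain ⟨B, hB⟩ := (hper.compact_of_continuous one_ne_zero hw).bddBelow
  have hB' : ∀ x, B ≤ w x := fun x => hB ⟨x, rfl⟩
  set δ' := min δ (1 / 2)
  have hδ' : 0 < δ' := lt_min hδ one_half_pos
  have hcos : cos (2 * π * δ') < 1 := by
    rw [← cos_zero]
    exact cos_lt_cos_of_nonneg_of_le_pi le_rfl
      (by nlinarith [pi_pos, min_le_right δ (1 / 2)]) (by positivity)
  -- so that `M * (1 - cos (2πy)) ≥ w 0 - B` whenever `δ' ≤ |y| ≤ 1/2`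
  set M := (w 0 - B) / (1 - cos (2 * π * δ'))
  have hM : M * (1 - cos (2 * π * δ')) = w 0 - B := div_mul_cancel₀ _ (sub_pos.2 hcos).ne'
  have hM0 : 0 ≤ M := div_nonneg (sub_nonneg.2 (hB' 0)) (sub_pos.2 hcos).le
  refine ⟨M, hM0, fun x => ?_⟩
  have hg : Periodic (fun x => w x + M * (1 - cos (2 * π * x))) 1 := fun x => by
    simp only [hper x, mul_add, mul_one, cos_add_two_pi]
  obtain ⟨y, hy, hxy⟩ := hg.exists_mem_Ico one_pos x (-(1 / 2))
  suffices w 0 - ε ≤ w y + M * (1 - cos (2 * π * y)) by linarith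
  rcases lt_or_ge |y| δ' with hy_near | hy_far
  · have h := hnear (show dist y 0 < δ by
      rw [Real.dist_eq, sub_zero]; exact hy_near.trans_le (min_le_left _ _))
    rw [Real.dist_eq] at h
    linarith [abs_lt.1 h, mul_nonneg hM0 (sub_nonneg.2 (cos_le_one (2 * π * y)))]
  · have hy_half : |y| ≤ 1 / 2 := abs_le.2 ⟨hy.1, by linarith [hy.2]⟩
    have hcos_y : cos (2 * π * y) ≤ cos (2 * π * δ') := by
      rw [← cos_abs (2 * π * y), abs_mul, abs_of_pos two_pi_pos]
      exact cos_le_cos_of_nonneg_of_le_pi (by positivity) (by nlinarith [pi_pos])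
        (by nlinarith [pi_pos])
    nlinarith [hB' y]

lemma Function.Periodic.eventually_integral_mul_cosBump_ge {w : ℝ → ℝ} (hper : Periodic w 1)
    (hw : Continuous w) {ε : ℝ} (hε : 0 < ε) :
    ∀ᶠ n : ℕ in atTop, (w 0 - ε) * ∫ x in (0 : ℝ)..1, cosBump n x ≤
      ∫ x in (0 : ℝ)..1, w x * cosBump n x := by
  obtain ⟨M, hM0, hM⟩ := hper.exists_sub_mul_one_sub_cos_le hw (half_pos hε)
  filter_upwards [tendsto_natCast_atTop_atTop.eventually_ge_atTop (2 * M / ε)] with n hn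
  set c := ∫ x in (0 : ℝ)..1, cosBump n x
  set m := ∫ x in (0 : ℝ)..1, (1 - cos (2 * π * x)) * cosBump n x
  have hm : 0 ≤ m := intervalIntegral.integral_nonneg zero_le_one fun x _ =>
    mul_nonneg (sub_nonneg.2 (cos_le_one _)) (cosBump_nonneg n x)
  have hMn : M ≤ n * (ε / 2) := by rw [div_le_iff₀ hε] at hn; linarith
  calc (w 0 - ε) * c ≤ (w 0 - ε / 2) * c - M * m := by
        nlinarith [nat_mul_integral_one_sub_cos_mul_cosBump_le n,
          mul_le_mul_of_nonneg_right hMn hm]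
    _ = ∫ x in (0 : ℝ)..1, (w 0 - ε / 2 - M * (1 - cos (2 * π * x))) * cosBump n x := by
        have h : ∀ x, (w 0 - ε / 2 - M * (1 - cos (2 * π * x))) * cosBump n x =
            (w 0 - ε / 2) * cosBump n x - M * ((1 - cos (2 * π * x)) * cosBump n x) :=
          fun x => by ring
        simp_rw [h]
        rw [intervalIntegral.integral_sub ((by fun_prop : Continuous _).intervalIntegrable _ _)
            ((by fun_prop : Continuous _).intervalIntegrable _ _),
          intervalIntegral.integral_const_mul, intervalIntegral.integral_const_mul]
    _ ≤ ∫ x in (0 : ℝ)..1, w x * cosBump n x :=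
        intervalIntegral.integral_mono_on zero_le_one
          ((by fun_prop : Continuous _).intervalIntegrable _ _)
          ((hw.mul (continuous_cosBump n)).intervalIntegrable _ _)
          fun x _ => mul_le_mul_of_nonneg_right (hM x) (cosBump_nonneg n x)

lemma Function.Periodic.exists_normalized_integral_mul_sq_ge {w : ℝ → ℝ} (hper : Periodic w 1)
    (hw : Continuous w) {ε : ℝ} (hε : 0 < ε) :
    ∃ ψ : ℝ → ℝ, ContDiff ℝ 1 ψ ∧ Periodic ψ 1 ∧ (∫ x in (0 : ℝ)..1, ψ x ^ 2) = 1 ∧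
      w 0 - ε ≤ ∫ x in (0 : ℝ)..1, w x * ψ x ^ 2 := by
  obtain ⟨N, hN⟩ := eventually_atTop.1 (hper.eventually_integral_mul_cosBump_ge hw hε)
  have hc := integral_cosBump_pos (2 * N)
  set c := ∫ x in (0 : ℝ)..1, cosBump (2 * N) x
  have hsq : ∀ x, (cosBump N x / √c) ^ 2 = cosBump (2 * N) x / c := fun x => by
    rw [div_pow, sq_sqrt hc.le, cosBump_sq]
  refine ⟨fun x => cosBump N x / √c, (contDiff_cosBump N).div_const _,
    fun x => congrArg (· / √c) (cosBump_periodic N x), ?_, ?_⟩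
  · simp_rw [hsq, intervalIntegral.integral_div]
    exact div_self hc.ne'
  · simp_rw [hsq, mul_div_assoc', intervalIntegral.integral_div]
    rw [le_div_iff₀ hc]
    exact hN (2 * N) (by omega)

lemma le_integral_deriv_sq_add_mul {K ψ : ℝ → ℝ} (hK : Continuous K) (h0 : 0 < K 0)
    (hle : ∀ x, K x ≤ K 0) (hψ : ContDiff ℝ 1 ψ) (hnorm : ∫ x in (0 : ℝ)..1, ψ x ^ 2 = 1)
    {lam : ℝ} (hlam : lam ≤ 0) :
    lam ≤ (∫ x in (0 : ℝ)..1, deriv ψ x ^ 2) + lam * ∫ x in (0 : ℝ)..1, K x / K 0 * ψ x ^ 2 := by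
  have hD : 0 ≤ ∫ x in (0 : ℝ)..1, deriv ψ x ^ 2 :=
    intervalIntegral.integral_nonneg zero_le_one fun x _ => sq_nonneg _
  have hJ : ∫ x in (0 : ℝ)..1, K x / K 0 * ψ x ^ 2 ≤ 1 :=
    (intervalIntegral.integral_mono_on zero_le_one
      ((by fun_prop : Continuous fun x => K x / K 0 * ψ x ^ 2).intervalIntegrable _ _)
      ((by fun_prop : Continuous fun x => ψ x ^ 2).intervalIntegrable _ _)
      fun x _ => mul_le_of_le_one_left (sq_nonneg _) ((div_le_one h0).2 (hle x))).trans_eq hnorm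
  nlinarith

lemma le_groundStateEnergy {K : ℝ → ℝ} (hK : Continuous K) (h0 : 0 < K 0)
    (hle : ∀ x, K x ≤ K 0) {lam : ℝ} (hlam : lam ≤ 0) : lam ≤ groundStateEnergy K lam :=
  Real.le_sInf (fun _ ⟨_, hψ, _, hnorm, hE⟩ =>
    hE ▸ le_integral_deriv_sq_add_mul hK h0 hle hψ hnorm hlam) hlam

lemma groundStateEnergy_le {K ψ : ℝ → ℝ} (hK : Continuous K) (h0 : 0 < K 0)
    (hle : ∀ x, K x ≤ K 0) {lam : ℝ} (hlam : lam ≤ 0) (hψ : ContDiff ℝ 1 ψ) (hper : Periodic ψ 1)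
    (hnorm : ∫ x in (0 : ℝ)..1, ψ x ^ 2 = 1) :
    groundStateEnergy K lam ≤
      (∫ x in (0 : ℝ)..1, deriv ψ x ^ 2) + lam * ∫ x in (0 : ℝ)..1, K x / K 0 * ψ x ^ 2 :=
  csInf_le ⟨lam, fun _ ⟨_, hφ, _, hφnorm, hE⟩ =>
    hE ▸ le_integral_deriv_sq_add_mul hK h0 hle hφ hφnorm hlam⟩ ⟨ψ, hψ, hper, hnorm, rfl⟩

theorem ground_state_asymptotics (K : ℝ → ℝ) (hK : Continuous K)
    (hper : ∀ x, K (x + 1) = K x) (h0 : 0 < K 0) (hle : ∀ x, K x ≤ K 0) :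
    Filter.Tendsto (fun lam => groundStateEnergy K lam / lam)
      Filter.atBot (nhds 1) := by
  refine tendsto_order.2 ⟨fun a ha => ?_, fun a ha => ?_⟩
  · have hε : 0 < (1 - a) / 2 := by linarith
    obtain ⟨ψ, hψ, hψper, hψnorm, hJ⟩ := Periodic.exists_normalized_integral_mul_sq_ge
      (w := fun x => K x / K 0) (fun x => congrArg (· / K 0) (hper x)) (hK.div_const _) hε
    rw [div_self h0.ne'] at hJ
    set D := ∫ x in (0 : ℝ)..1, deriv ψ x ^ 2
    set J := ∫ x in (0 : ℝ)..1, K x / K 0 * ψ x ^ 2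
    have hD : Tendsto (fun lam => D / lam) atBot (𝓝 0) := tendsto_const_nhds.div_atBot tendsto_id
    filter_upwards [hD.eventually (lt_mem_nhds (neg_lt_zero.2 hε)), eventually_lt_atBot 0]
      with lam hDlam hlam
    calc a < D / lam + J := by linarith
      _ = (D + lam * J) / lam := by rw [add_div, mul_div_cancel_left₀ _ hlam.ne]
      _ ≤ groundStateEnergy K lam / lam := (div_le_div_right_of_neg hlam).2
          (groundStateEnergy_le hK h0 hle hlam.le hψ hψper hψnorm)
  · filter_upwards [eventually_lt_atBot 0] with lam hlam
    exact ((div_le_one_of_neg hlam).2 (le_groundStateEnergy hK h0 hle hlam.le)).trans_lt ha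
end

section
/- Let (Ω, P̃) be a probability space and Φ : Ω → [0, ∞) measurable with E[e^{−Φ²/2}] > 0. Define f(λ) = (2π)^{−1/2} E[exp(−(λ+Φ)²/2)]. Then for all λ ≥ 0, f(λ) ≥ f(0) · exp(−λ²/2 − λ/(√(2πe)·f(0))). -/
/-!
Writing `w = exp (-Φ² / 2)`, completing the square gives
`f λ = (2π)^{-1/2} exp (-λ² / 2) E[w exp (-λ Φ)]`. Jensen's inequality for `exp` under the
probability measure `w dP / E[w]` bounds `E[w exp (-λ Φ)]` below by
`E[w] exp (-λ E[w Φ] / E[w])`, and `E[w Φ] ≤ e^{-1/2}` because `x exp (-x² / 2) ≤ e^{-1/2}`.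
-/

open MeasureTheory Real

lemma mul_exp_neg_sq_div_two_le (x : ℝ) : x * exp (-x ^ 2 / 2) ≤ exp (-1 / 2) := by
  have hx : x ≤ exp ((x ^ 2 - 1) / 2) := by
    nlinarith [add_one_le_exp ((x ^ 2 - 1) / 2), sq_nonneg (x - 1)]
  calc x * exp (-x ^ 2 / 2) ≤ exp ((x ^ 2 - 1) / 2) * exp (-x ^ 2 / 2) := by gcongr
    _ = exp (-1 / 2) := by rw [← exp_add]; ring_nf

lemma abs_mul_exp_neg_sq_div_two_le (x : ℝ) : |x| * exp (-x ^ 2 / 2) ≤ exp (-1 / 2) := by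
  simpa only [sq_abs] using mul_exp_neg_sq_div_two_le |x|

lemma exp_neg_add_sq_div_two (a x : ℝ) :
    exp (-(a + x) ^ 2 / 2) = exp (-a ^ 2 / 2) * (exp (-x ^ 2 / 2) * exp (-a * x)) := by
  simp only [← exp_add]
  ring_nf

/-- Jensen's inequality for `exp` under the weight `w`, stated without dividing by `∫ w`. -/
theorem integral_mul_exp_le_integral_mul_exp {α : Type*} [MeasurableSpace α]
    {μ : Measure α} {w g : α → ℝ} (hw0 : ∀ᵐ x ∂μ, 0 ≤ w x) (hw : Integrable w μ)
    (hwg : Integrable (fun x => w x * g x) μ) (hweg : Integrable (fun x => w x * exp (g x)) μ)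
    {m : ℝ} (hm : m * ∫ x, w x ∂μ ≤ ∫ x, w x * g x ∂μ) :
    (∫ x, w x ∂μ) * exp m ≤ ∫ x, w x * exp (g x) ∂μ := by
  have tangent (y : ℝ) : exp m * (y - m + 1) ≤ exp y := by
    simpa only [← exp_add, add_sub_cancel] using
      mul_le_mul_of_nonneg_left (add_one_le_exp (y - m)) (exp_pos m).le
  have hsum : Integrable (fun x => w x + w x * g x) μ := hw.add hwg
  calc (∫ x, w x ∂μ) * exp m
      ≤ exp m * ((∫ x, w x ∂μ) + (∫ x, w x * g x ∂μ) - m * ∫ x, w x ∂μ) := by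
        nlinarith [exp_pos m]
    _ = ∫ x, exp m * (w x + w x * g x - m * w x) ∂μ := by
        rw [integral_const_mul, integral_sub hsum (hw.const_mul m), integral_add hw hwg,
          integral_const_mul]
    _ ≤ ∫ x, w x * exp (g x) ∂μ := by
        refine integral_mono_ae ((hsum.sub (hw.const_mul m)).const_mul _) hweg ?_
        filter_upwards [hw0] with x hx
        nlinarith [mul_le_mul_of_nonneg_left (tangent (g x)) hx]

section Gaussian

variable {Ω : Type*} [MeasurableSpace Ω] (P : Measure Ω) {Φ : Ω → ℝ}

lemma integrable_exp_neg_sq_div_two [IsFiniteMeasure P] (hΦ : Measurable Φ) :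
    Integrable (fun ω => exp (-Φ ω ^ 2 / 2)) P := by
  refine .of_bound (by fun_prop) 1 (ae_of_all _ fun ω => ?_)
  rw [norm_of_nonneg (exp_pos _).le, exp_le_one_iff]
  nlinarith [sq_nonneg (Φ ω)]

lemma integrable_exp_neg_sq_div_two_mul [IsFiniteMeasure P] (hΦ : Measurable Φ) :
    Integrable (fun ω => exp (-Φ ω ^ 2 / 2) * Φ ω) P := by
  refine .of_bound (by fun_prop) (exp (-1 / 2)) (ae_of_all _ fun ω => ?_)
  rw [norm_mul, norm_of_nonneg (exp_pos _).le, norm_eq_abs, mul_comm]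
  exact abs_mul_exp_neg_sq_div_two_le _

lemma integrable_exp_neg_sq_div_two_mul_exp [IsFiniteMeasure P] (hΦ : Measurable Φ) (a : ℝ) :
    Integrable (fun ω => exp (-Φ ω ^ 2 / 2) * exp (-a * Φ ω)) P := by
  refine (integrable_const_mul_iff (exp_pos (-a ^ 2 / 2)).ne'.isUnit _).1 ?_
  simpa only [exp_neg_add_sq_div_two] using
    integrable_exp_neg_sq_div_two P (measurable_const.add hΦ) (Φ := fun ω => a + Φ ω)

lemma integral_exp_neg_sq_div_two_mul_le [IsProbabilityMeasure P] (hΦ : Measurable Φ) :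
    ∫ ω, exp (-Φ ω ^ 2 / 2) * Φ ω ∂P ≤ exp (-1 / 2) := by
  calc ∫ ω, exp (-Φ ω ^ 2 / 2) * Φ ω ∂P ≤ ∫ _, exp (-1 / 2) ∂P :=
        integral_mono (integrable_exp_neg_sq_div_two_mul P hΦ) (integrable_const _)
          fun ω => by simpa only [mul_comm] using mul_exp_neg_sq_div_two_le (Φ ω)
    _ = exp (-1 / 2) := by simp

lemma mul_exp_le_integral_exp_neg_sq_div_two_mul_exp [IsProbabilityMeasure P]
    (hΦ : Measurable Φ) {a : ℝ} (ha : 0 ≤ a) :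
    (∫ ω, exp (-Φ ω ^ 2 / 2) ∂P) * exp (-a / (exp (1 / 2) * ∫ ω, exp (-Φ ω ^ 2 / 2) ∂P)) ≤
      ∫ ω, exp (-Φ ω ^ 2 / 2) * exp (-a * Φ ω) ∂P := by
  have hw := integrable_exp_neg_sq_div_two P hΦ
  have hscale : (fun ω => exp (-Φ ω ^ 2 / 2) * (-a * Φ ω)) =
      fun ω => -a * (exp (-Φ ω ^ 2 / 2) * Φ ω) := by
    ext; ring
  refine integral_mul_exp_le_integral_mul_exp (ae_of_all _ fun _ => (exp_pos _).le) hw ?_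
    (integrable_exp_neg_sq_div_two_mul_exp P hΦ a) ?_
  · rw [hscale]
    exact (integrable_exp_neg_sq_div_two_mul P hΦ).const_mul _
  · have hZ : ∫ ω, exp (-Φ ω ^ 2 / 2) ∂P ≠ 0 := (integral_exp_pos hw).ne'
    have hmean : -a / (exp (1 / 2) * ∫ ω, exp (-Φ ω ^ 2 / 2) ∂P) * ∫ ω, exp (-Φ ω ^ 2 / 2) ∂P =
        -a * exp (-1 / 2) := by
      rw [neg_div 2, exp_neg, div_mul_eq_mul_div, mul_div_mul_right _ _ hZ, div_eq_mul_inv]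
    rw [hscale, integral_const_mul, hmean]
    exact mul_le_mul_of_nonpos_left (integral_exp_neg_sq_div_two_mul_le P hΦ) (by linarith)

end Gaussian

theorem density_right_tail_lower_general {Ω : Type*} [MeasurableSpace Ω]
    (P : Measure Ω) [IsProbabilityMeasure P] (Φ : Ω → ℝ) (hΦ : Measurable Φ)
    (f : ℝ → ℝ)
    (hf : ∀ lam : ℝ, f lam =
      (Real.sqrt (2 * Real.pi))⁻¹ * ∫ ω, Real.exp (-(lam + Φ ω) ^ 2 / 2) ∂P) :
    ∀ lam : ℝ, 0 ≤ lam →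
      f 0 * Real.exp (-lam ^ 2 / 2 -
        lam / (Real.sqrt (2 * Real.pi * Real.exp 1) * f 0)) ≤ f lam := by
  intro lam hlam
  set Z := ∫ ω, exp (-Φ ω ^ 2 / 2) ∂P
  have hf0 : f 0 = (√(2 * π))⁻¹ * Z := by simp [hf, Z]
  have hflam : f lam = (√(2 * π))⁻¹ * exp (-lam ^ 2 / 2) *
      ∫ ω, exp (-Φ ω ^ 2 / 2) * exp (-lam * Φ ω) ∂P := by
    simp only [hf, exp_neg_add_sq_div_two, integral_const_mul, mul_assoc]
  have hden : √(2 * π * exp 1) * f 0 = exp (1 / 2) * Z := by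
    rw [hf0, sqrt_mul (by positivity), ← exp_half]
    field_simp
  rw [hden, hflam, hf0, sub_eq_add_neg, exp_add, ← neg_div]
  calc (√(2 * π))⁻¹ * Z * (exp (-lam ^ 2 / 2) * exp (-lam / (exp (1 / 2) * Z)))
      = (√(2 * π))⁻¹ * exp (-lam ^ 2 / 2) * (Z * exp (-lam / (exp (1 / 2) * Z))) := by ring
    _ ≤ _ := by gcongr; exact mul_exp_le_integral_exp_neg_sq_div_two_mul_exp P hΦ hlam

theorem density_right_tail_lower {Ω : Type*} [MeasurableSpace Ω]
    (P : Measure Ω) [IsProbabilityMeasure P] (Φ : Ω → ℝ) (hΦ : Measurable Φ)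
    (hΦ0 : ∀ ω, 0 ≤ Φ ω)
    (hpos : 0 < ∫ ω, Real.exp (-(Φ ω) ^ 2 / 2) ∂P)
    (f : ℝ → ℝ)
    (hf : ∀ lam : ℝ, f lam =
      (Real.sqrt (2 * Real.pi))⁻¹ * ∫ ω, Real.exp (-(lam + Φ ω) ^ 2 / 2) ∂P) :
    ∀ lam : ℝ, 0 ≤ lam →
      f 0 * Real.exp (-lam ^ 2 / 2 -
        lam / (Real.sqrt (2 * Real.pi * Real.exp 1) * f 0)) ≤ f lam :=
  density_right_tail_lower_general P Φ hΦ f hf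
end
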